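/- Let (Ω, Σ, μ) be a non-atomic probability space, X a closed subspace of L¹(Ω), and A ∈ Σ with μ(A) > 0. If the ball {h ∈ X : ‖h‖₁ ≤ 1/ε} has closure in L¹(A) (under P_A) which is nowhere dense, and g ∈ L¹(A) with ‖g‖₁ ≤ 1 lies outside that closure, then by Hahn-Banach separation there exists f ∈ L^∞(A) with ‖f‖_∞ = 1 such that sup{|∫_A f h dμ| : h ∈ X, ‖h‖₁ ≤ 1} ≤ ε. -/

import Mathlib

open MeasureTheory
open Complex
open scoped ENNReal InnerProductSpace

/-- A measure is *non-atomic* if every set of positive measure contains a measurable subset of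
strictly smaller positive measure. -/
def Nonatomic {Ω : Type*} [MeasurableSpace Ω] (μ : Measure Ω) : Prop :=
  ∀ A : Set Ω, MeasurableSet A → 0 < μ A →
    ∃ B ⊆ A, MeasurableSet B ∧ 0 < μ B ∧ μ B < μ A

/-- The image `P_A[(1/ε)B_X]` of the ball of radius `1/ε` of `X` under the projection
`P_A : h ↦ χ_A·h`, as a subset of `L¹`. -/
def ProjBallImage {Ω : Type*} [MeasurableSpace Ω] (μ : Measure Ω)
    (X : Set (Lp ℂ 1 μ)) (A : Set Ω) (r : ℝ) : Set (Lp ℂ 1 μ) :=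
  {g | ∃ h ∈ X, ‖h‖ ≤ r ∧ (g : Ω → ℂ) =ᵐ[μ] A.indicator (h : Ω → ℂ)}

section Duality


variable {Ω : Type*} [MeasurableSpace Ω] (μ : Measure Ω) [IsProbabilityMeasure μ]

theorem mem1_of_L2 (k : Lp ℂ 2 μ) : MemLp (⇑k) 1 μ :=
  (Lp.memLp k).mono_exponent one_le_two

noncomputable def incl21 : Lp ℂ 2 μ →L[ℂ] Lp ℂ 1 μ :=
  LinearMap.mkContinuous
    { toFun := fun k => (mem1_of_L2 μ k).toLp ⇑k
      map_add' := by
        intro k₁ k₂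
        refine Lp.ext ?_
        filter_upwards [MemLp.coeFn_toLp (mem1_of_L2 μ (k₁ + k₂)), Lp.coeFn_add k₁ k₂,
          Lp.coeFn_add ((mem1_of_L2 μ k₁).toLp ⇑k₁) ((mem1_of_L2 μ k₂).toLp ⇑k₂),
          MemLp.coeFn_toLp (mem1_of_L2 μ k₁), MemLp.coeFn_toLp (mem1_of_L2 μ k₂)]
          with x h1 h2 h3 h4 h5
        simp only [h1, h2, h3, Pi.add_apply, h4, h5]
      map_smul' := by
        intro c k
        refine Lp.ext ?_
        filter_upwards [MemLp.coeFn_toLp (mem1_of_L2 μ (c • k)), Lp.coeFn_smul c k,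
          Lp.coeFn_smul c ((mem1_of_L2 μ k).toLp ⇑k), MemLp.coeFn_toLp (mem1_of_L2 μ k)]
          with x h1 h2 h3 h4
        simp only [RingHom.id_apply, h1, h2, h3, Pi.smul_apply, h4] } 1
    (by
      intro k
      simp only [LinearMap.coe_mk, AddHom.coe_mk, one_mul]
      rw [Lp.norm_toLp, Lp.norm_def]
      refine ENNReal.toReal_mono (Lp.eLpNorm_ne_top k) ?_
      exact eLpNorm_le_eLpNorm_of_exponent_le one_le_two (Lp.aestronglyMeasurable k))

theorem incl21_coeFn (k : Lp ℂ 2 μ) : ⇑(incl21 μ k) =ᵐ[μ] ⇑k :=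
  MemLp.coeFn_toLp (mem1_of_L2 μ k)

/-- L¹–L∞ duality for a probability measure. -/
theorem l1_dual_repr (φ : Lp ℂ 1 μ →L[ℂ] ℂ) :
    ∃ f₀ : Ω → ℂ, AEStronglyMeasurable f₀ μ ∧ (∀ᵐ x ∂μ, ‖f₀ x‖ ≤ ‖φ‖) ∧
      ∀ w : Lp ℂ 1 μ, φ w = ∫ x, f₀ x * (w : Ω → ℂ) x ∂μ := by
  set ψ : Lp ℂ 2 μ →L[ℂ] ℂ := φ.comp (incl21 μ) with hψ
  set f' : Lp ℂ 2 μ := (InnerProductSpace.toDual ℂ (Lp ℂ 2 μ)).symm ψ with hf'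
  set f₀ : Ω → ℂ := fun x => (starRingEnd ℂ) (f' x) with hf₀
  have hmeas : AEStronglyMeasurable f₀ μ :=
    RCLike.continuous_conj.comp_aestronglyMeasurable (Lp.aestronglyMeasurable f')
  have hnorm_eq : ∀ x, ‖f₀ x‖ = ‖(f' : Ω → ℂ) x‖ := fun x => norm_star _
  -- representation on L²
  have hA : ∀ k : Lp ℂ 2 μ, φ (incl21 μ k) = ∫ x, f₀ x * (k : Ω → ℂ) x ∂μ := by
    intro k
    have h1 : ψ k = ⟪f', k⟫_ℂ := (InnerProductSpace.toDual_symm_apply).symm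
    have h2 : ⟪f', k⟫_ℂ = ∫ x, (starRingEnd ℂ) ((f' : Ω → ℂ) x) * (k : Ω → ℂ) x ∂μ := by
      rw [L2.inner_def]
      exact integral_congr_ae (Filter.Eventually.of_forall fun x => (RCLike.inner_apply _ _).trans (mul_comm _ _))
    exact (h1.trans h2 : φ (incl21 μ k) = _)
  -- integrability of f₀ (and f') in L¹
  have hf'int : Integrable (fun x => (f' : Ω → ℂ) x) μ := (mem1_of_L2 μ f').integrable le_rfl
  -- a.e. bound
  have hbound : ∀ᵐ x ∂μ, ‖f₀ x‖ ≤ ‖φ‖ := by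
    have key : ∀ S : Set Ω, MeasurableSet S → μ S < ∞ →
        ∫ x in S, ‖(f' : Ω → ℂ) x‖ ∂μ ≤ ‖φ‖ * (μ S).toReal := by
      intro S hS _
      set k₀ : Ω → ℂ := S.indicator (fun x => (‖(f' : Ω → ℂ) x‖ : ℂ)⁻¹ * (f' : Ω → ℂ) x) with hk₀
      have hk₀meas : AEStronglyMeasurable k₀ μ := by
        refine AEStronglyMeasurable.indicator ?_ hS
        exact (((Complex.measurable_ofReal.comp_aemeasurable
          (Lp.aestronglyMeasurable f').norm.aemeasurable).inv.mul
          (Lp.aestronglyMeasurable f').aemeasurable)).aestronglyMeasurable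
      have hk₀bd : ∀ x, ‖k₀ x‖ ≤ 1 := by
        intro x
        rw [hk₀]
        by_cases hx : x ∈ S
        · rw [Set.indicator_of_mem hx]
          by_cases h0 : (f' : Ω → ℂ) x = 0
          · simp [h0]
          · rw [norm_mul, norm_inv, Complex.norm_real, Real.norm_eq_abs,
              _root_.abs_of_nonneg (norm_nonneg _),
              inv_mul_cancel₀ (norm_ne_zero_iff.mpr h0)]
        · rw [Set.indicator_of_notMem hx]; simp
      have hk₀mem : MemLp k₀ 2 μ :=
        (memLp_top_of_bound hk₀meas 1 (Filter.Eventually.of_forall hk₀bd)).mono_exponent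
          le_top
      set K : Lp ℂ 2 μ := hk₀mem.toLp k₀ with hK
      -- pointwise identity
      have hpt : ∀ x, f₀ x * k₀ x = S.indicator (fun x => (‖(f' : Ω → ℂ) x‖ : ℂ)) x := by
        intro x
        by_cases hx : x ∈ S
        · rw [hk₀]
          simp only [Set.indicator_of_mem hx]
          by_cases h0 : (f' : Ω → ℂ) x = 0
          · simp [hf₀, h0]
          · rw [hf₀]
            have : (starRingEnd ℂ) ((f' : Ω → ℂ) x) * ((‖(f' : Ω → ℂ) x‖ : ℂ)⁻¹ *
                (f' : Ω → ℂ) x) = (‖(f' : Ω → ℂ) x‖ : ℂ)⁻¹ *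
                ((starRingEnd ℂ) ((f' : Ω → ℂ) x) * (f' : Ω → ℂ) x) := by ring
            rw [this, Complex.conj_mul', sq, ← mul_assoc,
              inv_mul_cancel₀ (Complex.ofReal_ne_zero.mpr (norm_ne_zero_iff.mpr h0)), one_mul]
        · simp [hk₀, Set.indicator_of_notMem hx]
      -- compute φ (incl K)
      have hint : φ (incl21 μ K) = ((∫ x in S, ‖(f' : Ω → ℂ) x‖ ∂μ : ℝ) : ℂ) := by
        rw [hA K]
        have h1 : ∫ x, f₀ x * (K : Ω → ℂ) x ∂μ = ∫ x, f₀ x * k₀ x ∂μ := by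
          refine integral_congr_ae ?_
          filter_upwards [hk₀mem.coeFn_toLp] with x hx
          rw [hx]
        rw [h1]
        have h2 : ∫ x, f₀ x * k₀ x ∂μ = ∫ x, S.indicator (fun x => (‖(f' : Ω → ℂ) x‖ : ℂ)) x ∂μ :=
          integral_congr_ae (Filter.Eventually.of_forall hpt)
        rw [h2, integral_indicator hS]
        exact integral_ofReal
      -- norm of incl K in L¹
      have hKnorm : ‖incl21 μ K‖ ≤ (μ S).toReal := by
        rw [L1.norm_eq_integral_norm]
        have h1 : ∫ x, ‖(incl21 μ K : Ω → ℂ) x‖ ∂μ = ∫ x, ‖k₀ x‖ ∂μ := by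
          refine integral_congr_ae ?_
          filter_upwards [incl21_coeFn μ K, hk₀mem.coeFn_toLp] with x hx hx'
          rw [hx, hx']
        rw [h1]
        have h2 : ∫ x, ‖k₀ x‖ ∂μ ≤ ∫ x, S.indicator (fun _ => (1:ℝ)) x ∂μ := by
          refine integral_mono ((hk₀mem.mono_exponent one_le_two).integrable
            le_rfl).norm ((integrable_const (1:ℝ)).indicator hS) ?_
          intro x
          by_cases hx : x ∈ S
          · rw [Set.indicator_of_mem hx]; exact hk₀bd x
          · rw [Set.indicator_of_notMem hx]
            simp [hk₀, Set.indicator_of_notMem hx]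
        refine h2.trans ?_
        rw [integral_indicator_const (1:ℝ) hS, smul_eq_mul, mul_one]
        exact le_rfl
      have hnn : 0 ≤ ∫ x in S, ‖(f' : Ω → ℂ) x‖ ∂μ :=
        integral_nonneg fun x => norm_nonneg _
      calc ∫ x in S, ‖(f' : Ω → ℂ) x‖ ∂μ
          = ‖φ (incl21 μ K)‖ := by rw [hint, Complex.norm_real, Real.norm_eq_abs,
            _root_.abs_of_nonneg hnn]
        _ ≤ ‖φ‖ * ‖incl21 μ K‖ := φ.le_opNorm _
        _ ≤ ‖φ‖ * (μ S).toReal := by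
            exact mul_le_mul_of_nonneg_left hKnorm (norm_nonneg φ)
    have := ae_nonneg_of_forall_setIntegral_nonneg
      (f := fun x => ‖φ‖ - ‖(f' : Ω → ℂ) x‖)
      ((integrable_const _).sub hf'int.norm) ?_
    · filter_upwards [this] with x hx
      rw [hnorm_eq x]; simpa using hx
    · intro S hS hSfin
      rw [integral_sub (integrableOn_const (C := ‖φ‖) hSfin.ne) hf'int.norm.integrableOn,
        setIntegral_const, smul_eq_mul, sub_nonneg]
      exact (key S hS hSfin).trans_eq (mul_comm _ _)
  -- density of range of incl21
  have hdense : Dense (Set.range (incl21 μ) : Set (Lp ℂ 1 μ)) := by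
    refine Dense.mono ?_ (Lp.simpleFunc.denseRange (p := (1 : ℝ≥0∞)) ENNReal.one_ne_top)
    rintro _ ⟨ss, rfl⟩
    obtain ⟨C, hC⟩ := (Lp.simpleFunc.toSimpleFunc ss).exists_forall_norm_le
    have hmem2 : MemLp (⇑(Lp.simpleFunc.toSimpleFunc ss)) 2 μ :=
      (memLp_top_of_bound (Lp.simpleFunc.toSimpleFunc ss).aestronglyMeasurable C
        (Filter.Eventually.of_forall hC)).mono_exponent le_top
    refine ⟨hmem2.toLp _, ?_⟩
    refine Lp.ext ?_
    filter_upwards [incl21_coeFn μ (hmem2.toLp _), hmem2.coeFn_toLp,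
      Lp.simpleFunc.toSimpleFunc_eq_toFun ss] with x h1 h2 h3
    rw [h1, h2, h3]
  -- the integral functional is continuous
  have hintw : ∀ w : Lp ℂ 1 μ, Integrable (fun x => f₀ x * (w : Ω → ℂ) x) μ := fun w =>
    Integrable.bdd_mul (L1.integrable_coeFn w) hmeas hbound
  have hTcont : Continuous (fun w : Lp ℂ 1 μ => ∫ x, f₀ x * (w : Ω → ℂ) x ∂μ) := by
    refine Metric.continuous_iff.mpr fun w δ hδ => ⟨δ / (‖φ‖ + 1), by positivity, fun w' hww' => ?_⟩
    have hsub : ∫ x, f₀ x * (w' : Ω → ℂ) x ∂μ - ∫ x, f₀ x * (w : Ω → ℂ) x ∂μ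
        = ∫ x, f₀ x * ((w' : Ω → ℂ) x - (w : Ω → ℂ) x) ∂μ := by
      rw [← integral_sub (hintw w') (hintw w)]
      congr 1; ext x; ring
    have hb : ∀ᵐ x ∂μ, ‖f₀ x * ((w' : Ω → ℂ) x - (w : Ω → ℂ) x)‖
        ≤ ‖φ‖ * ‖(w' - w : Lp ℂ 1 μ) x‖ := by
      filter_upwards [hbound, Lp.coeFn_sub w' w] with x h1 h2
      rw [h2, Pi.sub_apply, norm_mul]
      exact mul_le_mul_of_nonneg_right h1 (norm_nonneg _) |>.trans le_rfl
    have hle : ‖∫ x, f₀ x * ((w' : Ω → ℂ) x - (w : Ω → ℂ) x) ∂μ‖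
        ≤ ‖φ‖ * ‖w' - w‖ := by
      refine (norm_integral_le_of_norm_le ((L1.integrable_coeFn (w' - w)).norm.const_mul ‖φ‖) hb).trans ?_
      rw [integral_const_mul, L1.norm_eq_integral_norm]
    rw [dist_eq_norm, hsub]
    refine lt_of_le_of_lt hle ?_
    have h1 : ‖w' - w‖ < δ / (‖φ‖ + 1) := by rwa [← dist_eq_norm]
    calc ‖φ‖ * ‖w' - w‖ ≤ (‖φ‖ + 1) * ‖w' - w‖ := by nlinarith [norm_nonneg (w' - w)]
      _ < (‖φ‖ + 1) * (δ / (‖φ‖ + 1)) := by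
          refine mul_lt_mul_of_pos_left h1 (by positivity)
      _ = δ := by field_simp
  -- conclude by density
  refine ⟨f₀, hmeas, hbound, ?_⟩
  have heq : (fun w : Lp ℂ 1 μ => φ w)
      = fun w : Lp ℂ 1 μ => ∫ x, f₀ x * (w : Ω → ℂ) x ∂μ := by
    refine Continuous.ext_on hdense φ.continuous hTcont ?_
    rintro _ ⟨k, rfl⟩
    show φ (incl21 μ k) = _
    rw [hA k]
    refine integral_congr_ae ?_
    filter_upwards [incl21_coeFn μ k] with x hx
    rw [hx]
  exact fun w => congrFun heq w


section Aux

variable {Ω : Type*} [MeasurableSpace Ω] {μ : Measure Ω}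

theorem indicator_congr_ae {A : Set Ω} {u v : Ω → ℂ} (h : u =ᵐ[μ] v) :
    A.indicator u =ᵐ[μ] A.indicator v := by
  filter_upwards [h] with x hx
  by_cases hxa : x ∈ A
  · rw [Set.indicator_of_mem hxa, Set.indicator_of_mem hxa, hx]
  · rw [Set.indicator_of_notMem hxa, Set.indicator_of_notMem hxa]


theorem projBall_convex (X : Submodule ℂ (Lp ℂ 1 μ)) (A : Set Ω) {r : ℝ} (hr : 0 ≤ r) :
    Convex ℝ (ProjBallImage μ (X : Set (Lp ℂ 1 μ)) A r) := by
  rintro g₁ ⟨h₁, hX₁, hn₁, hae₁⟩ g₂ ⟨h₂, hX₂, hn₂, hae₂⟩ a b ha hb hab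
  refine ⟨(a : ℂ) • h₁ + (b : ℂ) • h₂, X.add_mem (X.smul_mem _ hX₁) (X.smul_mem _ hX₂), ?_, ?_⟩
  · calc ‖(a : ℂ) • h₁ + (b : ℂ) • h₂‖ ≤ ‖(a : ℂ) • h₁‖ + ‖(b : ℂ) • h₂‖ := norm_add_le _ _
      _ = a * ‖h₁‖ + b * ‖h₂‖ := by
          rw [norm_smul, norm_smul, Complex.norm_real, Complex.norm_real,
            Real.norm_eq_abs, Real.norm_eq_abs, _root_.abs_of_nonneg ha,
            _root_.abs_of_nonneg hb]
      _ ≤ a * r + b * r := by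
          exact add_le_add (mul_le_mul_of_nonneg_left hn₁ ha) (mul_le_mul_of_nonneg_left hn₂ hb)
      _ = r := by rw [← add_mul, hab, one_mul]
  · have h2 : ⇑((a : ℂ) • h₁ + (b : ℂ) • h₂)
        =ᵐ[μ] (a : ℂ) • ⇑h₁ + (b : ℂ) • ⇑h₂ := by
      filter_upwards [Lp.coeFn_add ((a : ℂ) • h₁) ((b : ℂ) • h₂),
        Lp.coeFn_smul (a : ℂ) h₁, Lp.coeFn_smul (b : ℂ) h₂] with x hx hx1 hx2
      rw [hx, Pi.add_apply, hx1, hx2]; rfl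
    filter_upwards [Lp.coeFn_add (a • g₁) (b • g₂), Lp.coeFn_smul a g₁, Lp.coeFn_smul b g₂,
      hae₁, hae₂, indicator_congr_ae (μ := μ) h2] with x hx0 hxa hxb hx1 hx2 hx3
    rw [hx0, Pi.add_apply, hxa, hxb, hx3, Pi.smul_apply, Pi.smul_apply, hx1, hx2]
    by_cases hxA : x ∈ A
    · rw [Set.indicator_of_mem hxA, Set.indicator_of_mem hxA, Set.indicator_of_mem hxA,
        Pi.add_apply, Pi.smul_apply, Pi.smul_apply, Complex.real_smul, Complex.real_smul,
        smul_eq_mul, smul_eq_mul]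
    · rw [Set.indicator_of_notMem hxA, Set.indicator_of_notMem hxA,
        Set.indicator_of_notMem hxA, smul_zero, smul_zero, add_zero]

theorem projBall_balanced (X : Submodule ℂ (Lp ℂ 1 μ)) (A : Set Ω) {r : ℝ} (hr : 0 ≤ r) :
    Balanced ℂ (ProjBallImage μ (X : Set (Lp ℂ 1 μ)) A r) := by
  intro l hl c hc
  obtain ⟨d, ⟨h, hX, hn, hae⟩, rfl⟩ := hc
  refine ⟨l • h, X.smul_mem _ hX, ?_, ?_⟩
  · rw [norm_smul]
    calc ‖l‖ * ‖h‖ ≤ 1 * r := mul_le_mul hl hn (norm_nonneg _) zero_le_one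
      _ = r := one_mul r
  · filter_upwards [Lp.coeFn_smul l d, hae, indicator_congr_ae (μ := μ) (Lp.coeFn_smul l h)]
      with x hx0 hx1 hx3
    rw [hx0, Pi.smul_apply, hx1, hx3]
    by_cases hxA : x ∈ A
    · rw [Set.indicator_of_mem hxA, Set.indicator_of_mem hxA, Pi.smul_apply]
    · rw [Set.indicator_of_notMem hxA, Set.indicator_of_notMem hxA, smul_zero]

theorem projBall_zero_mem (X : Submodule ℂ (Lp ℂ 1 μ)) (A : Set Ω) {r : ℝ} (hr : 0 ≤ r) :
    (0 : Lp ℂ 1 μ) ∈ ProjBallImage μ (X : Set (Lp ℂ 1 μ)) A r := by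
  refine ⟨0, X.zero_mem, by simp [hr], ?_⟩
  filter_upwards [Lp.coeFn_zero ℂ 1 μ, indicator_congr_ae (μ := μ)
    (Lp.coeFn_zero ℂ 1 μ)] with x hx0 hx3
  rw [hx0, hx3]
  by_cases hxA : x ∈ A
  · rw [Set.indicator_of_mem hxA]
  · rw [Set.indicator_of_notMem hxA]; rfl

end Aux

end Duality

/-- If the closure of `P_A[(1/ε)B_X]` in `L¹(A)` is nowhere dense and some
`g ∈ L¹(A)` with `‖g‖ ≤ 1` lies outside this closure, then (by Hahn–Banach separation) there is
`f ∈ L^∞(A)` with `‖f‖_∞ = 1` such that `|∫_A f h dμ| ≤ ε` for all `h ∈ X` with `‖h‖₁ ≤ 1`. -/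

theorem separation_yields_small_functional
    {Ω : Type*} [MeasurableSpace Ω] (μ : Measure Ω) [IsProbabilityMeasure μ]
    (hna : Nonatomic μ)
    (X : Submodule ℂ (Lp ℂ 1 μ)) (hXclosed : IsClosed (X : Set (Lp ℂ 1 μ)))
    (A : Set Ω) (hA : MeasurableSet A) (hApos : 0 < μ A)
    (ε : ℝ) (hε : 0 < ε)
    (hnwd : IsNowhereDense (closure (ProjBallImage μ (X : Set (Lp ℂ 1 μ)) A (1 / ε))))
    (g : Lp ℂ 1 μ) (hgsupp : ∀ᵐ x ∂μ, x ∉ A → (g : Ω → ℂ) x = 0) (hgnorm : ‖g‖ ≤ 1)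
    (hgout : g ∉ closure (ProjBallImage μ (X : Set (Lp ℂ 1 μ)) A (1 / ε))) :
    ∃ f : Lp ℂ ⊤ μ, ‖f‖ = 1 ∧ (∀ᵐ x ∂μ, x ∉ A → (f : Ω → ℂ) x = 0) ∧
      ∀ h ∈ X, ‖h‖ ≤ 1 → ‖∫ x, (f : Ω → ℂ) x * (h : Ω → ℂ) x ∂μ‖ ≤ ε := by
  have hr : (0 : ℝ) ≤ 1 / ε := by positivity
  set C := closure (ProjBallImage μ (X : Set (Lp ℂ 1 μ)) A (1 / ε)) with hCdef
  have hCconv : Convex ℝ C := (projBall_convex X A hr).closure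
  have hCbal : Balanced ℂ C := (projBall_balanced X A hr).closure
  have h0C : (0 : Lp ℂ 1 μ) ∈ C := subset_closure (projBall_zero_mem X A hr)
  obtain ⟨u, t, hut, htg⟩ := geometric_hahn_banach_closed_point hCconv isClosed_closure hgout
  have ht0 : 0 < t := by have := hut 0 h0C; simpa using this
  set φ : Lp ℂ 1 μ →L[ℂ] ℂ := u.extendTo𝕜' with hφdef
  have hre : ∀ w, (φ w).re = u w := by
    intro w
    rw [hφdef]
    exact StrongDual.re_extendRCLike_apply (𝕜 := ℂ) u w
  have hφC : ∀ c ∈ C, ‖φ c‖ ≤ t := by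
    intro c hc
    rcases eq_or_ne (φ c) 0 with h0 | h0
    · rw [h0, norm_zero]; exact ht0.le
    · set l : ℂ := (‖φ c‖ : ℂ) / φ c with hldef
      have hl : ‖l‖ = 1 := by
        rw [hldef, norm_div, Complex.norm_real, Real.norm_eq_abs,
          _root_.abs_of_nonneg (norm_nonneg _), div_self (norm_ne_zero_iff.mpr h0)]
      have hlc : l • c ∈ C := hCbal l hl.le (Set.smul_mem_smul_set hc)
      have h1 : φ (l • c) = (‖φ c‖ : ℂ) := by
        rw [_root_.map_smul, smul_eq_mul, hldef, div_mul_cancel₀ _ h0]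
      have h2 : ‖φ c‖ = u (l • c) := by rw [← hre (l • c), h1, Complex.ofReal_re]
      rw [h2]; exact (hut _ hlc).le
  obtain ⟨f₀, hf₀meas, hf₀bd, hf₀rep⟩ := l1_dual_repr μ φ
  set fA : Ω → ℂ := A.indicator f₀ with hfAdef
  have hfAmeas : AEStronglyMeasurable fA μ := hf₀meas.indicator hA
  have hfAbd : ∀ᵐ x ∂μ, ‖fA x‖ ≤ ‖φ‖ := by
    filter_upwards [hf₀bd] with x hx
    by_cases hxA : x ∈ A
    · rw [hfAdef, Set.indicator_of_mem hxA]; exact hx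
    · rw [hfAdef, Set.indicator_of_notMem hxA, norm_zero]; exact norm_nonneg φ
  have hfAmem : MemLp fA ⊤ μ := memLp_top_of_bound hfAmeas ‖φ‖ hfAbd
  set FA : Lp ℂ ⊤ μ := hfAmem.toLp fA with hFAdef
  set N : ℝ := ‖FA‖ with hNdef
  have hNtoReal : N = (eLpNormEssSup (⇑FA) μ).toReal := by
    rw [hNdef, Lp.norm_def, eLpNorm_exponent_top]
  have hNbd : ∀ᵐ x ∂μ, ‖fA x‖ ≤ N := by
    have hfin : eLpNormEssSup (⇑FA) μ ≠ ∞ := by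
      have h := Lp.eLpNorm_ne_top FA
      rwa [eLpNorm_exponent_top] at h
    filter_upwards [ae_le_eLpNormEssSup (f := ⇑FA) (μ := μ), hfAmem.coeFn_toLp] with x hx hx'
    have h2 := ENNReal.toReal_mono hfin hx
    rw [toReal_enorm] at h2
    rw [← hx', hNtoReal]
    exact h2
  have hbd : ∀ w : Lp ℂ 1 μ, ‖∫ x, fA x * (w : Ω → ℂ) x ∂μ‖ ≤ N * ‖w‖ := by
    intro w
    have hb2 : ∀ᵐ x ∂μ, ‖fA x * (w : Ω → ℂ) x‖ ≤ N * ‖(w : Ω → ℂ) x‖ := by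
      filter_upwards [hNbd] with x hx
      rw [norm_mul]
      exact mul_le_mul_of_nonneg_right hx (norm_nonneg _)
    refine (norm_integral_le_of_norm_le ((L1.integrable_coeFn w).norm.const_mul N) hb2).trans ?_
    rw [integral_const_mul, ← L1.norm_eq_integral_norm]
  have hφg : φ g = ∫ x, fA x * (g : Ω → ℂ) x ∂μ := by
    rw [hf₀rep g]
    refine integral_congr_ae ?_
    filter_upwards [hgsupp] with x hx
    by_cases hxA : x ∈ A
    · rw [hfAdef, Set.indicator_of_mem hxA]
    · rw [hx hxA, mul_zero, mul_zero]
  have htN : t < N := by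
    have h1 : t < (φ g).re := by rw [hre g]; exact htg
    have h2 : (φ g).re ≤ ‖φ g‖ := Complex.re_le_norm (φ g)
    have h3 : ‖φ g‖ ≤ N * ‖g‖ := by rw [hφg]; exact hbd g
    have h4 : N * ‖g‖ ≤ N * 1 := by
      refine mul_le_mul_of_nonneg_left hgnorm (norm_nonneg FA)
    linarith
  have hN0 : 0 < N := ht0.trans htN
  refine ⟨(N⁻¹ : ℝ) • FA, ?_, ?_, ?_⟩
  · rw [norm_smul, Real.norm_eq_abs, _root_.abs_of_nonneg (inv_nonneg.2 hN0.le), ← hNdef,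
      inv_mul_cancel₀ hN0.ne']
  · filter_upwards [Lp.coeFn_smul (N⁻¹ : ℝ) FA, hfAmem.coeFn_toLp] with x h1 h2 hxA
    rw [h1, Pi.smul_apply, h2, hfAdef, Set.indicator_of_notMem hxA, smul_zero]
  · intro h hX hh1
    set h' : Lp ℂ 1 μ := ((ε : ℂ))⁻¹ • h with hh'def
    have hh'X : h' ∈ X := X.smul_mem _ hX
    have hh'n : ‖h'‖ ≤ 1 / ε := by
      rw [hh'def, norm_smul, norm_inv, Complex.norm_real, Real.norm_eq_abs,
        _root_.abs_of_pos hε, one_div]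
      calc ε⁻¹ * ‖h‖ ≤ ε⁻¹ * 1 := mul_le_mul_of_nonneg_left hh1 (by positivity)
        _ = ε⁻¹ := mul_one _
    have hmemc : MemLp (A.indicator (⇑h')) 1 μ := (Lp.memLp h').indicator hA
    set c : Lp ℂ 1 μ := hmemc.toLp _ with hcdef
    have hcC : c ∈ C := subset_closure ⟨h', hh'X, hh'n, hmemc.coeFn_toLp⟩
    have hφc : (ε : ℂ) * φ c = ∫ x, fA x * (h : Ω → ℂ) x ∂μ := by
      rw [hf₀rep c, ← integral_const_mul]
      refine integral_congr_ae ?_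
      filter_upwards [hmemc.coeFn_toLp, Lp.coeFn_smul ((ε : ℂ)⁻¹) h] with x h1 h2
      rw [h1]
      by_cases hxA : x ∈ A
      · rw [Set.indicator_of_mem hxA, h2, Pi.smul_apply, hfAdef, Set.indicator_of_mem hxA,
          smul_eq_mul]
        have hεne : (ε : ℂ) ≠ 0 := Complex.ofReal_ne_zero.mpr hε.ne'
        field_simp
      · rw [Set.indicator_of_notMem hxA, hfAdef, Set.indicator_of_notMem hxA,
          mul_zero, mul_zero, zero_mul]
    have hkey : ‖∫ x, fA x * (h : Ω → ℂ) x ∂μ‖ ≤ ε * t := by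
      rw [← hφc, norm_mul, Complex.norm_real, Real.norm_eq_abs, _root_.abs_of_pos hε]
      exact mul_le_mul_of_nonneg_left (hφC c hcC) hε.le
    have hfh : ∫ x, (((N⁻¹ : ℝ) • FA : Lp ℂ ⊤ μ) : Ω → ℂ) x * (h : Ω → ℂ) x ∂μ
        = (N⁻¹ : ℝ) • ∫ x, fA x * (h : Ω → ℂ) x ∂μ := by
      rw [← integral_smul]
      refine integral_congr_ae ?_
      filter_upwards [Lp.coeFn_smul (N⁻¹ : ℝ) FA, hfAmem.coeFn_toLp] with x h1 h2
      rw [h1, Pi.smul_apply, h2, smul_mul_assoc]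
    rw [hfh, norm_smul, Real.norm_eq_abs, _root_.abs_of_nonneg (inv_nonneg.2 hN0.le)]
    have h5 : N⁻¹ * t ≤ 1 := by
      rw [← div_eq_inv_mul]
      exact div_le_one_of_le₀ htN.le hN0.le
    calc N⁻¹ * ‖∫ x, fA x * (h : Ω → ℂ) x ∂μ‖ ≤ N⁻¹ * (ε * t) :=
        mul_le_mul_of_nonneg_left hkey (by positivity)
      _ = ε * (N⁻¹ * t) := by ring
      _ ≤ ε * 1 := mul_le_mul_of_nonneg_left h5 hε.le
      _ = ε := mul_one ε
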